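/- In n-dimensional hyperbolic space H^n, let X be a compact set, let z ∈ conv(X), and let r > 0. Then the intersection of the closed balls B(x, r) over all x ∈ X is contained in the closed ball B(z, r). -/

import Mathlib

/-- The Poincaré ball model of `n`-dimensional hyperbolic space. -/
noncomputable def HypSpace (n : ℕ) : Type := {x : EuclideanSpace ℝ (Fin n) // ‖x‖ < 1}

noncomputable instance (n : ℕ) : TopologicalSpace (HypSpace n) :=
  instTopologicalSpaceSubtype

/-- The hyperbolic distance in the Poincaré ball model. -/
noncomputable def hDist {n : ℕ} (x y : HypSpace n) : ℝ :=
  Real.log (1 + 2 * ‖x.1 - y.1‖ ^ 2 /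
      ((1 - ‖x.1‖ ^ 2) * (1 - ‖y.1‖ ^ 2)) +
    Real.sqrt ((1 + 2 * ‖x.1 - y.1‖ ^ 2 /
      ((1 - ‖x.1‖ ^ 2) *
        (1 - ‖y.1‖ ^ 2))) ^ 2 - 1))

/-- The geodesic segment between `x` and `y`: points lying metrically between them. -/
def hSeg {n : ℕ} (x y : HypSpace n) : Set (HypSpace n) :=
  {z | hDist x z + hDist z y = hDist x y}

/-- Geodesic convexity in hyperbolic space. -/
def HConvex {n : ℕ} (S : Set (HypSpace n)) : Prop :=
  ∀ x ∈ S, ∀ y ∈ S, hSeg x y ⊆ S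

/-- The hyperbolic convex hull: intersection of all convex sets containing `X`. -/
def hConvexHull {n : ℕ} (X : Set (HypSpace n)) : Set (HypSpace n) :=
  ⋂₀ {S | HConvex S ∧ X ⊆ S}

/-- The closed hyperbolic ball of radius `r` centered at `x`. -/
def hBall {n : ℕ} (x : HypSpace n) (r : ℝ) : Set (HypSpace n) :=
  {y | hDist x y ≤ r}

/-!
A point `w` of the intersection satisfies `X ⊆ B(w, r)`, so it suffices that closed balls are
geodesically convex. In the hyperboloid model `cosh d(u, v)` is the Minkowski product of `u`
and `v`, so `B(w, r)` is the trace of the half-space `⟪w, u⟫ ≤ cosh r`; and the cosh addition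
formula forces a point `p` metrically between `x` and `y` to be the combination
`(sinh d(p, y) • x + sinh d(x, p) • y) / sinh d(x, y)`, whose weights sum to at most one.
-/

open Real RealInnerProductSpace

section Minkowski

variable {E : Type*} [NormedAddCommGroup E] [InnerProductSpace ℝ E]

noncomputable def minkowski : (ℝ × E) →ₗ[ℝ] (ℝ × E) →ₗ[ℝ] ℝ :=
  (LinearMap.mul ℝ ℝ).compl₁₂ (LinearMap.fst ℝ ℝ E) (LinearMap.fst ℝ ℝ E) -
    (innerₗ E).compl₁₂ (LinearMap.snd ℝ ℝ E) (LinearMap.snd ℝ ℝ E)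

@[simp]
lemma minkowski_apply (u v : ℝ × E) : minkowski u v = u.1 * v.1 - ⟪u.2, v.2⟫ := rfl

lemma minkowski_comm (u v : ℝ × E) : minkowski u v = minkowski v u := by
  simp only [minkowski_apply, real_inner_comm, mul_comm]

lemma eq_zero_of_null_of_minkowski_orthogonal {u v : ℝ × E} (hv : minkowski v v = 0)
    (hu : 0 < minkowski u u) (huv : minkowski v u = 0) : v = 0 := by
  obtain ⟨t, x⟩ := v
  obtain ⟨s, y⟩ := u
  simp only [minkowski_apply] at hv hu huv
  have hxy : ⟪x, y⟫ = t * s := by linarith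
  have hxx : ⟪x, x⟫ = t * t := by linarith
  have hcs := real_inner_mul_inner_self_le x y
  rw [hxy, hxx] at hcs
  have ht : t = 0 := by
    have : t ^ 2 * (s * s - ⟪y, y⟫) ≤ 0 := by nlinarith
    exact pow_eq_zero_iff two_ne_zero |>.mp
      (le_antisymm (nonpos_of_mul_nonpos_left this hu) (sq_nonneg t))
  have hx : x = 0 := inner_self_eq_zero.mp (by rw [hxx, ht, mul_zero])
  rw [ht, hx, Prod.mk_zero_zero]

-- `sinh β • x + sinh α • y - sinh (α + β) • p` is null and orthogonal to the timelike `x`.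
lemma sinh_add_smul_eq_of_minkowski_eq_cosh {x p y : ℝ × E} {α β : ℝ}
    (hx : minkowski x x = 1) (hp : minkowski p p = 1) (hy : minkowski y y = 1)
    (hxp : minkowski x p = cosh α) (hpy : minkowski p y = cosh β)
    (hxy : minkowski x y = cosh (α + β)) :
    sinh (α + β) • p = sinh β • x + sinh α • y := by
  set v := sinh β • x + sinh α • y - sinh (α + β) • p
  have hpx : minkowski p x = cosh α := by rw [minkowski_comm, hxp]
  have hyp : minkowski y p = cosh β := by rw [minkowski_comm, hpy]
  have hyx : minkowski y x = cosh (α + β) := by rw [minkowski_comm, hxy]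
  have hvx : minkowski v x = 0 := by
    simp only [v, map_add, map_sub, map_smul, LinearMap.add_apply, LinearMap.sub_apply,
      LinearMap.smul_apply, smul_eq_mul, hx, hyx, hpx, sinh_add, cosh_add]
    linear_combination (-sinh β) * cosh_sq α
  have hvy : minkowski v y = 0 := by
    simp only [v, map_add, map_sub, map_smul, LinearMap.add_apply, LinearMap.sub_apply,
      LinearMap.smul_apply, smul_eq_mul, hy, hxy, hpy, sinh_add, cosh_add]
    linear_combination (-sinh α) * cosh_sq β
  have hvp : minkowski v p = 0 := by
    simp only [v, map_add, map_sub, map_smul, LinearMap.add_apply, LinearMap.sub_apply,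
      LinearMap.smul_apply, smul_eq_mul, hp, hxp, hyp, sinh_add]
    ring
  have hvv : minkowski v v = 0 := by
    conv_lhs => enter [2]; simp only [v]
    simp only [map_add, map_sub, map_smul, smul_eq_mul, hvx, hvy, hvp]
    ring
  have hv : v = 0 := eq_zero_of_null_of_minkowski_orthogonal hvv (by rw [hx]; exact one_pos) hvx
  exact (sub_eq_zero.mp hv).symm

end Minkowski

namespace HypSpace

variable {n : ℕ}

lemma one_sub_norm_sq_pos (x : HypSpace n) : 0 < 1 - ‖x.1‖ ^ 2 := by
  nlinarith [x.2, norm_nonneg x.1]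

/-- The isometry from the Poincaré ball onto the upper sheet of the hyperboloid
`minkowski u u = 1`. -/
noncomputable def toHyperboloid (x : HypSpace n) : ℝ × EuclideanSpace ℝ (Fin n) :=
  ((1 + ‖x.1‖ ^ 2) / (1 - ‖x.1‖ ^ 2), (2 / (1 - ‖x.1‖ ^ 2)) • x.1)

lemma minkowski_toHyperboloid (x y : HypSpace n) :
    minkowski (toHyperboloid x) (toHyperboloid y) =
      1 + 2 * ‖x.1 - y.1‖ ^ 2 / ((1 - ‖x.1‖ ^ 2) * (1 - ‖y.1‖ ^ 2)) := by
  have hx := one_sub_norm_sq_pos x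
  have hy := one_sub_norm_sq_pos y
  simp only [minkowski_apply, toHyperboloid, real_inner_smul_left, real_inner_smul_right,
    norm_sub_sq_real]
  field_simp
  ring

lemma one_le_minkowski_toHyperboloid (x y : HypSpace n) :
    1 ≤ minkowski (toHyperboloid x) (toHyperboloid y) := by
  have hx := one_sub_norm_sq_pos x
  have hy := one_sub_norm_sq_pos y
  rw [minkowski_toHyperboloid]
  exact le_add_of_nonneg_right (by positivity)

lemma minkowski_toHyperboloid_self (x : HypSpace n) :
    minkowski (toHyperboloid x) (toHyperboloid x) = 1 := by
  rw [minkowski_toHyperboloid]; simp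

lemma hDist_eq_arcosh (x y : HypSpace n) :
    hDist x y = arcosh (minkowski (toHyperboloid x) (toHyperboloid y)) := by
  rw [minkowski_toHyperboloid]; rfl

lemma cosh_hDist (x y : HypSpace n) :
    cosh (hDist x y) = minkowski (toHyperboloid x) (toHyperboloid y) := by
  rw [hDist_eq_arcosh, cosh_arcosh (one_le_minkowski_toHyperboloid x y)]

lemma hDist_nonneg (x y : HypSpace n) : 0 ≤ hDist x y := by
  rw [hDist_eq_arcosh]; exact arcosh_nonneg (one_le_minkowski_toHyperboloid x y)

lemma hDist_comm (x y : HypSpace n) : hDist x y = hDist y x := by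
  rw [hDist_eq_arcosh, hDist_eq_arcosh, minkowski_comm]

lemma eq_of_hDist_eq_zero {x y : HypSpace n} (h : hDist x y = 0) : x = y := by
  have hx := one_sub_norm_sq_pos x
  have hy := one_sub_norm_sq_pos y
  rw [hDist_eq_arcosh, arcosh_eq_zero_iff (one_le_minkowski_toHyperboloid x y),
    minkowski_toHyperboloid, add_eq_left, div_eq_zero_iff] at h
  have hxy : ‖x.1 - y.1‖ = 0 := by
    rcases h with h | h
    · simpa using h
    · exact absurd h (by positivity)
  exact Subtype.ext (sub_eq_zero.mp (norm_eq_zero.mp hxy))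

lemma hDist_le_iff {x y : HypSpace n} {r : ℝ} (hr : 0 ≤ r) :
    hDist x y ≤ r ↔ minkowski (toHyperboloid x) (toHyperboloid y) ≤ cosh r := by
  have h1 := one_le_minkowski_toHyperboloid x y
  rw [hDist_eq_arcosh, ← arcosh_le_arcosh (by linarith) (cosh_pos r), arcosh_cosh hr]

lemma sinh_hDist_smul_toHyperboloid {x p y : HypSpace n} (hp : p ∈ hSeg x y) :
    sinh (hDist x y) • toHyperboloid p =
      sinh (hDist p y) • toHyperboloid x + sinh (hDist x p) • toHyperboloid y := by
  rw [← show hDist x p + hDist p y = hDist x y from hp]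
  exact sinh_add_smul_eq_of_minkowski_eq_cosh (minkowski_toHyperboloid_self x)
    (minkowski_toHyperboloid_self p) (minkowski_toHyperboloid_self y)
    (cosh_hDist x p).symm (cosh_hDist p y).symm (by rw [hp, cosh_hDist])

end HypSpace

open HypSpace

section Balls

variable {n : ℕ}

lemma mem_hBall {x y : HypSpace n} {r : ℝ} : y ∈ hBall x r ↔ hDist x y ≤ r := Iff.rfl

lemma mem_hBall_comm {x y : HypSpace n} {r : ℝ} : y ∈ hBall x r ↔ x ∈ hBall y r := by
  rw [mem_hBall, mem_hBall, hDist_comm]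

lemma hConvex_hBall (w : HypSpace n) (r : ℝ) : HConvex (hBall w r) := by
  intro x hx y hy p hp
  rw [mem_hBall] at hx hy ⊢
  have hr : 0 ≤ r := (hDist_nonneg w x).trans hx
  have hxp := hDist_nonneg x p
  have hpy := hDist_nonneg p y
  have hseg : hDist x p + hDist p y = hDist x y := hp
  rcases (hDist_nonneg x y).eq_or_lt with hxy | hxy
  · rwa [← eq_of_hDist_eq_zero (show hDist x p = 0 by linarith)]
  rw [hDist_le_iff hr] at hx hy ⊢
  have hcombo : sinh (hDist x y) * minkowski (toHyperboloid w) (toHyperboloid p) =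
      sinh (hDist p y) * minkowski (toHyperboloid w) (toHyperboloid x) +
        sinh (hDist x p) * minkowski (toHyperboloid w) (toHyperboloid y) := by
    simpa only [map_add, map_smul, smul_eq_mul] using
      congrArg (minkowski (toHyperboloid w)) (sinh_hDist_smul_toHyperboloid hp)
  have hweights : sinh (hDist p y) + sinh (hDist x p) ≤ sinh (hDist x y) := by
    rw [← hseg, sinh_add]
    nlinarith [one_le_cosh (hDist x p), one_le_cosh (hDist p y),
      sinh_nonneg_iff.mpr hxp, sinh_nonneg_iff.mpr hpy]
  refine le_of_mul_le_mul_left ?_ (sinh_pos_iff.mpr hxy)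
  calc sinh (hDist x y) * minkowski (toHyperboloid w) (toHyperboloid p)
      ≤ (sinh (hDist p y) + sinh (hDist x p)) * cosh r := by
        rw [hcombo, add_mul]
        gcongr
    _ ≤ sinh (hDist x y) * cosh r := by gcongr

end Balls

theorem stmt_17_general {n : ℕ} (X : Set (HypSpace n))
    (z : HypSpace n) (hz : z ∈ hConvexHull X) (r : ℝ) :
    (⋂ x ∈ X, hBall x r) ⊆ hBall z r := by
  intro w hw
  have hX : X ⊆ hBall w r := fun x hx => mem_hBall_comm.mp (Set.mem_iInter₂.mp hw x hx)
  exact mem_hBall_comm.mp (Set.mem_sInter.mp hz _ ⟨hConvex_hBall w r, hX⟩)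

theorem stmt_17 {n : ℕ} (X : Set (HypSpace n)) (hX : IsCompact X)
    (z : HypSpace n) (hz : z ∈ hConvexHull X) (r : ℝ) (hr : 0 < r) :
    (⋂ x ∈ X, hBall x r) ⊆ hBall z r :=
  stmt_17_general X z hz r
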